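/- arXiv:1712.10167 — 2 statements merged into one kernel-verified Lean document; each statement's English description precedes it below -/
import Mathlib

section
/- Let G be a connected simple graph, let b be a bridge of G, and let G₁ and G₂ be the two connected components of G − b. Then tsp(G) = tsp(G₁) + tsp(G₂) + 2. -/
/-- `tsp G`: the minimum length (number of edge-traversals) of a closed walk in `G`
visiting every vertex of `G`. -/
noncomputable def tsp {V : Type*} (G : SimpleGraph V) : ℕ :=
  sInf {m : ℕ | ∃ (x : V) (w : G.Walk x x), (∀ u : V, u ∈ w.support) ∧ w.length = m}

/-!
Projecting a tour of `G` onto the component `G₁` of `G - b` (sending every vertex outside `G₁`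
to the endpoint of `b` in `G₁`) gives a tour of `G₁` whose length is the number of steps of the
tour inside `G₁`; likewise for `G₂`. Since `b` separates its endpoints in `G - b`, each of the two
arcs of the tour between them uses `b`, so the tour spends at least two further steps on `b`.
Conversely, optimal tours of `G₁` and `G₂` based at the endpoints of `b` are joined into a tour of
`G` by crossing `b` twice.
-/

namespace List

theorem countP_add_countP_add_countP_le_length {α : Type*} (l : List α) {p q r : α → Bool}
    (hpq : ∀ a, p a → ¬ q a) (hpr : ∀ a, p a → ¬ r a) (hqr : ∀ a, q a → ¬ r a) :
    l.countP p + l.countP q + l.countP r ≤ l.length := by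
  induction l with
  | nil => simp
  | cons a l ih =>
    simp only [countP_cons, length_cons]
    have := hpq a; have := hpr a; have := hqr a
    split_ifs <;> simp_all <;> omega

end List

namespace SimpleGraph

variable {V : Type*} {G : SimpleGraph V}

theorem tsp_le_length {x : V} (w : G.Walk x x) (hw : ∀ y, y ∈ w.support) :
    tsp G ≤ w.length :=
  Nat.sInf_le ⟨x, w, hw, rfl⟩

theorem Connected.exists_walk_forall_mem_support [Finite V] (hG : G.Connected) (x : V) :
    ∃ w : G.Walk x x, ∀ y, y ∈ w.support := by
  have := Fintype.ofFinite V
  suffices h : ∀ l : List V, ∃ w : G.Walk x x, ∀ y ∈ l, y ∈ w.support by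
    simpa using h Finset.univ.toList
  intro l
  induction l with
  | nil => exact ⟨.nil, by simp⟩
  | cons y l ih =>
    obtain ⟨w, hw⟩ := ih
    obtain ⟨p⟩ := hG.preconnected x y
    refine ⟨p.append (p.reverse.append w), fun z hz => ?_⟩
    rcases List.mem_cons.mp hz with rfl | hz
    · simp [Walk.mem_support_append_iff]
    · simp [Walk.mem_support_append_iff, hw z hz]

theorem Connected.exists_walk_length_eq_tsp [Finite V] (hG : G.Connected) (x : V) :
    ∃ w : G.Walk x x, (∀ y, y ∈ w.support) ∧ w.length = tsp G := by
  classical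
  obtain ⟨w, hw⟩ := hG.exists_walk_forall_mem_support x
  obtain ⟨y, c, hc, hlen⟩ : tsp G ∈ _ := Nat.sInf_mem ⟨w.length, x, w, hw, rfl⟩
  exact ⟨c.rotate x (hc x), by simpa using hc, by simpa using hlen⟩

theorem Walk.exists_walk_length_eq_countP {W : Type*} {H : SimpleGraph W} (f : V → W)
    (P : G.Dart → Prop) [DecidablePred P] (hP : ∀ d, P d → H.Adj (f d.fst) (f d.snd))
    (hnP : ∀ d, ¬ P d → f d.fst = f d.snd) {a b : V} (w : G.Walk a b) :
    ∃ p : H.Walk (f a) (f b), (∀ x ∈ w.support, f x ∈ p.support) ∧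
      p.length = w.darts.countP (fun d => P d) := by
  induction w with
  | nil => exact ⟨.nil, by simp, rfl⟩
  | @cons a c b h w ih =>
    obtain ⟨p, hp, hlen⟩ := ih
    by_cases hd : P ⟨(a, c), h⟩
    · refine ⟨.cons (hP _ hd) p, ?_, by simp [hlen, hd]⟩
      simp only [Walk.support_cons, List.mem_cons, forall_eq_or_imp, true_or, true_and]
      exact fun x hx => .inr (hp x hx)
    · have hac : f a = f c := hnP _ hd
      refine ⟨p.copy hac.symm rfl, ?_, by simp [hlen, hd]⟩
      simp only [Walk.support_cons, List.mem_cons, forall_eq_or_imp, Walk.support_copy, hac]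
      exact ⟨hp c w.start_mem_support, hp⟩

namespace ConnectedComponent

open Classical in
noncomputable def retract (C : G.ConnectedComponent) (c : C.supp) (x : V) : C.supp :=
  if h : x ∈ C.supp then ⟨x, h⟩ else c

variable {C : G.ConnectedComponent} {c : C.supp} {x : V}

theorem retract_of_mem (h : x ∈ C.supp) : C.retract c x = ⟨x, h⟩ := dif_pos h

theorem retract_of_notMem (h : x ∉ C.supp) : C.retract c x = c := dif_neg h

end ConnectedComponent

variable {u v : V}

theorem Preconnected.reachable_deleteEdges_or (hG : G.Preconnected) (x : V) :
    (G.deleteEdges {s(u, v)}).Reachable x u ∨ (G.deleteEdges {s(u, v)}).Reachable x v := by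
  suffices h : ∀ {a b : V} (p : G.Walk a b),
      (G.deleteEdges {s(u, v)}).Reachable b u ∨ (G.deleteEdges {s(u, v)}).Reachable b v →
      (G.deleteEdges {s(u, v)}).Reachable a u ∨ (G.deleteEdges {s(u, v)}).Reachable a v from
    h (hG x u).some (.inl .rfl)
  intro a b p hb
  induction p with
  | nil => exact hb
  | @cons a c _ h _ ih =>
    by_cases he : s(a, c) = s(u, v)
    · rcases Sym2.eq_iff.mp he with ⟨rfl, -⟩ | ⟨rfl, -⟩
      exacts [.inl .rfl, .inr .rfl]
    · have hac : (G.deleteEdges {s(u, v)}).Adj a c := by simpa [h] using he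
      exact (ih hb).imp hac.reachable.trans hac.reachable.trans

theorem tsp_le_tsp_add_tsp_add_two [Finite V] (hG : G.Connected) (huv : G.Adj u v) :
    tsp G ≤ tsp ((G.deleteEdges {s(u, v)}).connectedComponentMk u).toSimpleGraph +
      tsp ((G.deleteEdges {s(u, v)}).connectedComponentMk v).toSimpleGraph + 2 := by
  set C₁ := (G.deleteEdges {s(u, v)}).connectedComponentMk u
  set C₂ := (G.deleteEdges {s(u, v)}).connectedComponentMk v
  have hu : u ∈ C₁ := ConnectedComponent.connectedComponentMk_mem
  have hv : v ∈ C₂ := ConnectedComponent.connectedComponentMk_mem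
  obtain ⟨w₁, hw₁, hlen₁⟩ := C₁.connected_toSimpleGraph.exists_walk_length_eq_tsp ⟨u, hu⟩
  obtain ⟨w₂, hw₂, hlen₂⟩ := C₂.connected_toSimpleGraph.exists_walk_length_eq_tsp ⟨v, hv⟩
  let f₁ := (Hom.ofLE (G.deleteEdges_le _)).comp C₁.toSimpleGraph_hom
  let f₂ := (Hom.ofLE (G.deleteEdges_le _)).comp C₂.toSimpleGraph_hom
  have hf₁ : f₁ ⟨u, hu⟩ = u := rfl
  have hf₂ : f₂ ⟨v, hv⟩ = v := rfl
  let t₁ : G.Walk u u := (w₁.map f₁).copy hf₁ hf₁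
  let t₂ : G.Walk v v := (w₂.map f₂).copy hf₂ hf₂
  let W : G.Walk u u := t₁.append (.cons huv (t₂.append (.cons huv.symm .nil)))
  refine (tsp_le_length W fun y => ?_).trans_eq ?_
  · rcases hG.preconnected.reachable_deleteEdges_or (u := u) (v := v) y with hy | hy
    · have hy₁ : y ∈ C₁.supp := ConnectedComponent.sound hy
      simp only [W, t₁, Walk.mem_support_append_iff, Walk.support_copy, Walk.support_map]
      exact .inl (List.mem_map.mpr ⟨⟨y, hy₁⟩, hw₁ _, rfl⟩)
    · have hy₂ : y ∈ C₂.supp := ConnectedComponent.sound hy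
      simp only [W, t₂, Walk.mem_support_append_iff, Walk.support_cons, Walk.support_copy,
        Walk.support_map, List.mem_cons]
      exact .inr (.inr (.inl (List.mem_map.mpr ⟨⟨y, hy₂⟩, hw₂ _, rfl⟩)))
  · simp [W, t₁, t₂, hlen₁, hlen₂]
    omega

open Classical in
theorem tsp_toSimpleGraph_le_countP (hb : G.IsBridge s(u, v)) {x : V} (w : G.Walk x x)
    (hw : ∀ y, y ∈ w.support) :
    tsp ((G.deleteEdges {s(u, v)}).connectedComponentMk u).toSimpleGraph ≤
      w.darts.countP (fun d => d.fst ∈ (G.deleteEdges {s(u, v)}).connectedComponentMk u ∧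
        (G.deleteEdges {s(u, v)}).Adj d.fst d.snd) := by
  set C := (G.deleteEdges {s(u, v)}).connectedComponentMk u
  have hv : v ∉ C.supp := fun h => hb (C.reachable_of_mem_supp rfl h)
  let r := C.retract ⟨u, ConnectedComponent.connectedComponentMk_mem⟩
  have hP (d : G.Dart) (hd : d.fst ∈ C ∧ (G.deleteEdges {s(u, v)}).Adj d.fst d.snd) :
      C.toSimpleGraph.Adj (r d.fst) (r d.snd) := by
    simp only [r, ConnectedComponent.retract_of_mem hd.1,
      ConnectedComponent.retract_of_mem (C.mem_supp_of_adj_mem_supp hd.1 hd.2)]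
    exact hd.2
  have hnP (d : G.Dart) (hd : ¬(d.fst ∈ C ∧ (G.deleteEdges {s(u, v)}).Adj d.fst d.snd)) :
      r d.fst = r d.snd := by
    by_cases hadj : (G.deleteEdges {s(u, v)}).Adj d.fst d.snd
    · have h₁ : d.fst ∉ C.supp := fun h => hd ⟨h, hadj⟩
      have h₂ : d.snd ∉ C.supp := mt (C.mem_supp_congr_adj hadj).mpr h₁
      simp only [r, ConnectedComponent.retract_of_notMem h₁,
        ConnectedComponent.retract_of_notMem h₂]
    · have he : d.edge = s(u, v) := by
        by_contra h
        exact hadj (deleteEdges_adj.mpr ⟨d.adj, h⟩)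
      have hr : r u = r v := by
        simp only [r, ConnectedComponent.retract_of_notMem hv]
        exact ConnectedComponent.retract_of_mem _
      rcases dart_edge_eq_mk'_iff'.mp he with ⟨h₁, h₂⟩ | ⟨h₁, h₂⟩ <;> rw [h₁, h₂]
      exacts [hr, hr.symm]
  obtain ⟨p, hp, hlen⟩ := w.exists_walk_length_eq_countP r _ hP hnP
  refine (tsp_le_length p fun y => ?_).trans_eq hlen
  simpa [r, ConnectedComponent.retract_of_mem y.2] using hp y (hw y)

theorem Walk.two_le_countP_darts_edge_eq [DecidableEq V] (hb : G.IsBridge s(u, v)) {x : V}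
    (w : G.Walk x x) (hu : u ∈ w.support) (hv : v ∈ w.support) :
    2 ≤ w.darts.countP (fun d => d.edge = s(u, v)) := by
  have one_le {a b : V} (p : G.Walk a b) (h : s(u, v) ∈ p.edges) :
      1 ≤ p.darts.countP (fun d => d.edge = s(u, v)) := by
    obtain ⟨d, hd, hde⟩ := List.mem_map.mp h
    exact List.countP_pos_iff.mpr ⟨d, hd, by simpa using hde⟩
  have hvc : v ∈ (w.rotate u hu).support := (w.mem_support_rotate_iff u hu).mpr hv
  rw [← (w.rotate_darts u hu).perm.countP_eq, ← (w.rotate u hu).take_spec hvc, Walk.darts_append,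
    List.countP_append]
  have := one_le _ (((w.rotate u hu).takeUntil v hvc).mem_edges_of_not_reachable_deleteEdges hb)
  have := one_le _ (((w.rotate u hu).dropUntil v hvc).mem_edges_of_not_reachable_deleteEdges
    fun h => hb h.symm)
  omega

theorem tsp_add_tsp_add_two_le [Finite V] (hG : G.Connected) (hb : G.IsBridge s(u, v)) :
    tsp ((G.deleteEdges {s(u, v)}).connectedComponentMk u).toSimpleGraph +
      tsp ((G.deleteEdges {s(u, v)}).connectedComponentMk v).toSimpleGraph + 2 ≤ tsp G := by
  classical
  obtain ⟨w, hw, hlen⟩ := hG.exists_walk_length_eq_tsp u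
  have hb' : G.IsBridge s(v, u) := Sym2.eq_swap (a := u) ▸ hb
  have h₁ := tsp_toSimpleGraph_le_countP hb w hw
  have h₂ := tsp_toSimpleGraph_le_countP hb' w hw
  rw [Sym2.eq_swap] at h₂
  have h₃ := w.two_le_countP_darts_edge_eq hb (hw u) (hw v)
  have hsum := w.darts.countP_add_countP_add_countP_le_length
    (p := fun d => d.fst ∈ (G.deleteEdges {s(u, v)}).connectedComponentMk u ∧
      (G.deleteEdges {s(u, v)}).Adj d.fst d.snd)
    (q := fun d => d.fst ∈ (G.deleteEdges {s(u, v)}).connectedComponentMk v ∧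
      (G.deleteEdges {s(u, v)}).Adj d.fst d.snd)
    (r := fun d => d.edge = s(u, v)) ?_ ?_ ?_
  · rw [← hlen, ← w.length_darts]
    omega
  · simp only [decide_eq_true_eq]
    rintro d ⟨hu, -⟩ ⟨hv, -⟩
    exact hb (ConnectedComponent.exact (hu.symm.trans hv))
  all_goals
    simp only [decide_eq_true_eq]
    rintro d ⟨-, hadj⟩ he
    exact (deleteEdges_adj.mp hadj).2 he

end SimpleGraph

/-- If `b = s(u,v)` is a bridge of a connected graph `G`, and `G₁`, `G₂` are the two
connected components of `G − b` (namely the components of `u` and of `v`), then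
`tsp(G) = tsp(G₁) + tsp(G₂) + 2`. -/
theorem stmt6 {V : Type*} [Fintype V] (G : SimpleGraph V) (hG : G.Connected)
    (u v : V) (huv : G.Adj u v) (hbridge : G.IsBridge s(u, v)) :
    tsp G =
      tsp ((G.deleteEdges {s(u, v)}).induce
            ((G.deleteEdges {s(u, v)}).connectedComponentMk u).supp) +
      tsp ((G.deleteEdges {s(u, v)}).induce
            ((G.deleteEdges {s(u, v)}).connectedComponentMk v).supp) + 2 :=
  le_antisymm (SimpleGraph.tsp_le_tsp_add_tsp_add_two hG huv)
    (SimpleGraph.tsp_add_tsp_add_two_le hG hbridge)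
end

section
/- Let G be a connected simple cubic graph that has a dominating cycle. Then G has a traveling salesman tour of length at most (5/4)·|V(G)|, i.e., tsp(G) ≤ (5/4)·|V(G)|. -/
/-!
Let `K` be the vertex set of the dominating cycle `C` and `S` the set of remaining vertices.
Since `C` meets every edge, each vertex of `S` has all three of its neighbours on `C`, while each
vertex of `C` already has two neighbours on `C` and hence at most one in `S`; double counting the
edges between `S` and `K` gives `3 |S| ≤ |K|`. Walking around `C` with a detour `v → s → v` for
every `s ∈ S` is a tour of length `|K| + 2 |S| ≤ 5/4 (|K| + |S|)`.
-/

/-- The degree of a vertex: number of neighbors. -/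
noncomputable def degN {V : Type*} (G : SimpleGraph V) (v : V) : ℕ :=
  Nat.card {u : V | G.Adj v u}

open Finset

lemma degN_eq_degree {V : Type*} (G : SimpleGraph V) (v : V) [Fintype (G.neighborSet v)] :
    degN G v = G.degree v :=
  (Nat.card_eq_fintype_card (α := G.neighborSet v)).trans (G.card_neighborSet_eq_degree v)

lemma tsp_le_length {V : Type*} {G : SimpleGraph V} {x : V} (w : G.Walk x x)
    (hw : ∀ u, u ∈ w.support) : tsp G ≤ w.length :=
  Nat.sInf_le ⟨x, w, hw, rfl⟩

namespace SimpleGraph.Walk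

variable {V : Type*} {G : SimpleGraph V}

lemma IsCycle.card_support_toFinset [DecidableEq V] {u : V} {c : G.Walk u u}
    (hc : c.IsCycle) : #c.support.toFinset = c.length := by
  have htail : c.support.toFinset = c.support.tail.toFinset := by
    conv_lhs => rw [← c.cons_tail_support, List.toFinset_cons]
    exact insert_eq_self.mpr (List.mem_toFinset.mpr (c.end_mem_tail_support hc.not_nil))
  rw [htail, List.toFinset_card_of_nodup hc.support_nodup, List.length_tail, length_support]
  simp

lemma IsCycle.two_le_card_neighborFinset_inter_support [DecidableEq V] {u v : V}
    [Fintype (G.neighborSet v)] {c : G.Walk u u} (hc : c.IsCycle) (hv : v ∈ c.support) :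
    2 ≤ #(G.neighborFinset v ∩ c.support.toFinset) := by
  set c' := c.rotate v hv
  have hc' : c'.IsCycle := (isCycle_rotate hv).mpr hc
  have hpair : {c'.snd, c'.penultimate} ⊆ G.neighborFinset v ∩ c.support.toFinset := by
    simp only [insert_subset_iff, singleton_subset_iff, mem_inter, mem_neighborFinset,
      List.mem_toFinset, ← mem_support_rotate_iff c v hv]
    exact ⟨⟨c'.adj_snd hc'.not_nil, getVert_mem_support ..⟩,
      (c'.adj_penultimate hc'.not_nil).symm, getVert_mem_support ..⟩
  calc 2 = #{c'.snd, c'.penultimate} := (card_pair hc'.snd_ne_penultimate).symm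
    _ ≤ _ := card_le_card hpair

lemma IsCycle.card_compl_support_mul_le [Fintype V] [DecidableEq V] [DecidableRel G.Adj]
    {k : ℕ} (hreg : G.IsRegularOfDegree k) {u : V} {c : G.Walk u u} (hc : c.IsCycle)
    (hdom : ∀ a b : V, G.Adj a b → a ∈ c.support ∨ b ∈ c.support) :
    #c.support.toFinsetᶜ * k ≤ c.length * (k - 2) := by
  set K := c.support.toFinset
  rw [← hc.card_support_toFinset]
  refine card_mul_le_card_mul G.Adj (fun a ha => ?_) (fun b hb => ?_)
  · have hnbr : G.neighborFinset a ⊆ K.bipartiteAbove G.Adj a := fun b hb => by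
      rw [mem_neighborFinset] at hb
      have ha' : a ∉ c.support := by simpa [K] using ha
      simpa [bipartiteAbove, K, ha', hb] using hdom a b hb
    exact (hreg a).symm.le.trans (card_le_card hnbr)
  · have hsub : Kᶜ.bipartiteBelow G.Adj b ⊆ G.neighborFinset b \ K := fun a ha => by
      simp only [bipartiteBelow, mem_filter, mem_compl] at ha
      simpa [ha.1] using ha.2.symm
    have h2 : 2 ≤ #(G.neighborFinset b ∩ K) :=
      hc.two_le_card_neighborFinset_inter_support (List.mem_toFinset.mp hb)
    have hsplit := card_sdiff_add_card_inter (G.neighborFinset b) K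
    rw [card_neighborFinset_eq_degree, hreg b] at hsplit
    have := card_le_card hsub
    omega

lemma exists_length_eq_add_two_of_adj [DecidableEq V] {x v u : V} (w : G.Walk x x)
    (hv : v ∈ w.support) (h : G.Adj v u) :
    ∃ w' : G.Walk x x, w'.length = w.length + 2 ∧ u ∈ w'.support ∧ w.support ⊆ w'.support := by
  refine ⟨(w.takeUntil v hv).append ((cons h (cons h.symm nil)).append (w.dropUntil v hv)),
    ?_, by simp [mem_support_append_iff], fun z hz => ?_⟩
  · have := congr_arg Walk.length (w.take_spec hv)
    rw [length_append] at this
    simp only [length_append, length_cons, length_nil]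
    omega
  · rw [← w.take_spec hv, mem_support_append_iff] at hz
    simp only [mem_support_append_iff]
    tauto

lemma exists_length_eq_add_two_mul_card_of_forall_adj [DecidableEq V] {x : V} (c : G.Walk x x)
    (T : Finset V) (hT : ∀ u ∈ T, ∃ v ∈ c.support, G.Adj v u) :
    ∃ w : G.Walk x x, w.length = c.length + 2 * #T ∧ c.support ⊆ w.support ∧
      ∀ u ∈ T, u ∈ w.support := by
  induction T using Finset.induction_on with
  | empty => exact ⟨c, rfl, List.Subset.refl _, by simp⟩
  | @insert u T hu ih =>
    obtain ⟨w, hlen, hcw, hTw⟩ := ih fun a ha => hT a (mem_insert_of_mem ha)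
    obtain ⟨v, hv, hvu⟩ := hT u (mem_insert_self u T)
    obtain ⟨w', hlen', huw', hww'⟩ := w.exists_length_eq_add_two_of_adj (hcw hv) hvu
    refine ⟨w', by rw [hlen', hlen, card_insert_of_notMem hu]; ring,
      List.Subset.trans hcw hww', fun z hz => ?_⟩
    rcases mem_insert.mp hz with rfl | hz
    exacts [huw', hww' (hTw z hz)]

end SimpleGraph.Walk

lemma tsp_le_length_add_two_mul_card_compl {V : Type*} [Fintype V] [DecidableEq V]
    {G : SimpleGraph V} {x : V} (c : G.Walk x x)
    (hadj : ∀ u ∉ c.support, ∃ v ∈ c.support, G.Adj v u) :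
    tsp G ≤ c.length + 2 * #c.support.toFinsetᶜ := by
  obtain ⟨w, hlen, hcw, hSw⟩ := c.exists_length_eq_add_two_mul_card_of_forall_adj
    c.support.toFinsetᶜ fun u hu => hadj u (by simpa using hu)
  refine hlen ▸ tsp_le_length w fun u => ?_
  by_cases hu : u ∈ c.support
  exacts [hcw hu, hSw u (by simpa using hu)]

theorem stmt11_general {V : Type*} [Fintype V] (G : SimpleGraph V)
    (hcubic : ∀ v : V, degN G v = 3)
    (x : V) (c : G.Walk x x) (hcyc : c.IsCycle)
    (hdom : ∀ a b : V, G.Adj a b → a ∈ c.support ∨ b ∈ c.support) :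
    (tsp G : ℝ) ≤ (5 / 4 : ℝ) * (Fintype.card V : ℝ) := by
  classical
  have hreg : G.IsRegularOfDegree 3 := fun v => (degN_eq_degree G v).symm.trans (hcubic v)
  have hcount := hcyc.card_compl_support_mul_le hreg hdom
  have htour : tsp G ≤ c.length + 2 * #c.support.toFinsetᶜ := by
    refine tsp_le_length_add_two_mul_card_compl c fun u hu => ?_
    obtain ⟨v, hv⟩ := (G.degree_pos_iff_exists_adj u).mp (by rw [hreg u]; norm_num)
    exact ⟨v, (hdom u v hv).resolve_left hu, hv.symm⟩
  have hcard : c.length + #c.support.toFinsetᶜ = Fintype.card V := by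
    rw [card_compl, ← hcyc.card_support_toFinset]
    have := card_le_univ c.support.toFinset
    omega
  have hnat : 4 * tsp G ≤ 5 * Fintype.card V := by omega
  have hreal : (4 * tsp G : ℝ) ≤ 5 * Fintype.card V := by exact_mod_cast hnat
  linarith

/-- A connected simple cubic graph with a dominating cycle has a traveling salesman tour
of length at most (5/4)·|V(G)|. -/
theorem stmt11 {V : Type*} [Fintype V] (G : SimpleGraph V) (hG : G.Connected)
    (hcubic : ∀ v : V, degN G v = 3)
    (x : V) (c : G.Walk x x) (hcyc : c.IsCycle)
    (hdom : ∀ a b : V, G.Adj a b → a ∈ c.support ∨ b ∈ c.support) :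
    (tsp G : ℝ) ≤ (5 / 4 : ℝ) * (Fintype.card V : ℝ) :=
  stmt11_general G hcubic x c hcyc hdom
end
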